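/- arXiv:2411.10035 — 4 statements merged into one kernel-verified Lean document; each statement's English description precedes it below -/
import Mathlib

section
/- Let Z be a topological space, X ⊆ Z, and {G_t : t ∈ T} a family of G_δ-subsets of Z whose union is disjoint from X. If there are open sets V_t ⊇ G_t such that the indexed family {V_t} is point-finite in X (i.e., each x ∈ X belongs to only finitely many V_t), then there exists a G_δ-subset G of Z with ⋃_t G_t ⊆ G ⊆ Z \ X. -/
/-!
Shrink each `G t = ⋂ n, W t n` to a decreasing sequence of open sets inside `V t` and take
`G' = ⋂ n, ⋃ t, W t n`. A point `x ∈ X` lies in only finitely many `W t 0`; each of these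
misses `x` from some stage on, so beyond the largest such stage no `W t n` contains `x`.
-/

open Set

theorem IsGδ.exists_antitone_isOpen_subset {Z : Type*} [TopologicalSpace Z] {G V : Set Z}
    (hG : IsGδ G) (hV : IsOpen V) (hGV : G ⊆ V) :
    ∃ W : ℕ → Set Z, (∀ n, IsOpen (W n)) ∧ Antitone W ∧ W 0 ⊆ V ∧ ⋂ n, W n = G := by
  obtain ⟨U, hUo, hUG⟩ := hG.eq_iInter_nat
  refine ⟨dissipate fun n => V ∩ U n, fun n => ?_, antitone_dissipate,
    (dissipate_subset le_rfl).trans inter_subset_left, ?_⟩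
  · exact (finite_le_nat n).isOpen_biInter fun k _ => hV.inter (hUo k)
  · rw [iInter_dissipate, ← inter_iInter, ← hUG, inter_eq_right.2 hGV]

theorem Set.mem_iUnion_iInter_of_antitone {T Z : Type*} {W : T → ℕ → Set Z}
    (hW : ∀ t, Antitone (W t)) {x : Z} (hfin : {t | x ∈ W t 0}.Finite)
    (hx : x ∈ ⋂ n, ⋃ t, W t n) : x ∈ ⋃ t, ⋂ n, W t n := by
  by_contra h
  simp only [mem_iUnion, mem_iInter, not_exists, not_forall] at h
  choose leave hleave using h
  obtain ⟨N, hN⟩ := (hfin.image leave).bddAbove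
  obtain ⟨t, ht⟩ := mem_iUnion.1 (mem_iInter.1 hx N)
  exact hleave t (hW t (hN ⟨t, hW t (Nat.zero_le N) ht, rfl⟩) ht)

/-- Tkachuk's lemma: if a family of `G_δ`-sets disjoint from `X` has an open expansion
which is point-finite in `X`, then the union of the family is contained in a `G_δ`-set
disjoint from `X`. -/
theorem gdelta_separation_of_pointFinite_expansion
    {Z : Type*} [TopologicalSpace Z] {T : Type*} (X : Set Z)
    (G V : T → Set Z)
    (hGδ : ∀ t, IsGδ (G t)) (hdisj : (⋃ t, G t) ∩ X = ∅)
    (hopen : ∀ t, IsOpen (V t)) (hsub : ∀ t, G t ⊆ V t)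
    (hpf : ∀ x ∈ X, {t | x ∈ V t}.Finite) :
    ∃ G' : Set Z, IsGδ G' ∧ (⋃ t, G t) ⊆ G' ∧ G' ⊆ Xᶜ := by
  choose W hWo hWanti hWV hWG using
    fun t => (hGδ t).exists_antitone_isOpen_subset (hopen t) (hsub t)
  refine ⟨⋂ n, ⋃ t, W t n, .iInter_of_isOpen fun n => isOpen_iUnion fun t => hWo t n, ?_, ?_⟩
  · refine iUnion_subset fun t => ?_
    rw [← hWG t]
    exact iInter_mono fun n => subset_iUnion (W · n) t
  · intro x hx hxX
    have hxG := mem_iUnion_iInter_of_antitone hWanti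
      ((hpf x hxX).subset fun t ht => hWV t ht) hx
    simp only [hWG] at hxG
    exact (disjoint_iff_inter_eq_empty.2 hdisj).notMem_of_mem_left hxG hxX
end

section
/- Every Lindelöf scattered regular space is a Menger space. -/
/-- A subset `A` of a topological space is scattered if every nonempty subset of `A`
has a point isolated in it. -/
def IsScatteredSet {Z : Type*} [TopologicalSpace Z] (A : Set Z) : Prop :=
  ∀ s ⊆ A, s.Nonempty → ∃ x ∈ s, ∃ U : Set Z, IsOpen U ∧ U ∩ s = {x}

/-- A space is Menger if for every sequence of open covers there are finite
subfamilies whose union is a cover. -/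
def IsMengerSpace (X : Type*) [TopologicalSpace X] : Prop :=
  ∀ 𝒰 : ℕ → Set (Set X),
    (∀ n, ∀ u ∈ 𝒰 n, IsOpen u) → (∀ n, ⋃₀ 𝒰 n = Set.univ) →
    ∃ 𝒱 : ℕ → Set (Set X),
      (∀ n, 𝒱 n ⊆ 𝒰 n ∧ (𝒱 n).Finite) ∧ ⋃ n, ⋃₀ 𝒱 n = Set.univ

/-!
Call a point good if it has a neighbourhood with the Menger property. A point `x` near which
every other point is good is itself good: by regularity `x` has a closed neighbourhood `t`
whose points other than `x` are all good, and for each open `U ∋ x` the closed,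
hence Lindelöf, set `t \ U` is covered by countably many open Menger sets and so is Menger; one
member of the first cover catches `x` and the remaining covers take care of `t \ U`. Since the
space is scattered, every point is therefore good, and the Lindelöf property makes the whole
space Menger.
-/

open Set Filter Topology

section Menger

variable {X : Type*} [TopologicalSpace X]

/-- The Menger property of a subset, tested against open covers of the ambient space. -/
def IsMenger (A : Set X) : Prop :=
  ∀ 𝒰 : ℕ → Set (Set X),
    (∀ n, ∀ u ∈ 𝒰 n, IsOpen u) → (∀ n, ⋃₀ 𝒰 n = univ) →
    ∃ 𝒱 : ℕ → Set (Set X), (∀ n, 𝒱 n ⊆ 𝒰 n ∧ (𝒱 n).Finite) ∧ A ⊆ ⋃ n, ⋃₀ 𝒱 n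

theorem IsMenger.mono {A B : Set X} (hB : IsMenger B) (hAB : A ⊆ B) : IsMenger A := by
  intro 𝒰 hopen hcov
  obtain ⟨𝒱, h𝒱, hB⟩ := hB 𝒰 hopen hcov
  exact ⟨𝒱, h𝒱, hAB.trans hB⟩

theorem isMenger_empty : IsMenger (∅ : Set X) :=
  fun _ _ _ ↦ ⟨fun _ ↦ ∅, fun _ ↦ ⟨empty_subset _, finite_empty⟩, empty_subset _⟩

/-- The `k`-th set is handled by the covers `𝒰 (Nat.pair k n)`, `n : ℕ`. -/
theorem isMenger_iUnion {A : ℕ → Set X} (h : ∀ k, IsMenger (A k)) : IsMenger (⋃ k, A k) := by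
  intro 𝒰 hopen hcov
  choose 𝒱 h𝒱 hA using fun k ↦ h k (fun n ↦ 𝒰 (Nat.pair k n)) (fun _ ↦ hopen _) (fun _ ↦ hcov _)
  refine ⟨fun m ↦ 𝒱 m.unpair.1 m.unpair.2, fun m ↦ ?_, ?_⟩
  · simpa only [Nat.pair_unpair] using h𝒱 m.unpair.1 m.unpair.2
  · refine iUnion_subset fun k x hx ↦ ?_
    obtain ⟨n, hn⟩ := mem_iUnion.mp (hA k hx)
    exact mem_iUnion.mpr ⟨Nat.pair k n, by simpa only [Nat.unpair_pair] using hn⟩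

theorem Set.Countable.isMenger_sUnion {S : Set (Set X)} (hS : S.Countable)
    (h : ∀ A ∈ S, IsMenger A) : IsMenger (⋃₀ S) := by
  rcases S.eq_empty_or_nonempty with rfl | hne
  · simpa only [sUnion_empty] using isMenger_empty
  obtain ⟨f, rfl⟩ := hS.exists_eq_range hne
  rw [sUnion_range]
  exact isMenger_iUnion fun k ↦ h (f k) (mem_range_self k)

theorem IsLindelof.isMenger {K : Set X} (hK : IsLindelof K)
    (h : ∀ x ∈ K, ∃ U ∈ 𝓝 x, IsMenger U) : IsMenger K := by
  refine hK.induction_on (fun _ _ hst ht ↦ ht.mono hst) (fun _ ↦ Set.Countable.isMenger_sUnion)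
    fun x hx ↦ ?_
  obtain ⟨U, hU, hMenger⟩ := h x hx
  exact ⟨U, mem_nhdsWithin_of_mem_nhds hU, hMenger⟩

theorem isMenger_of_isMenger_diff (x : X) {A : Set X}
    (h : ∀ U, IsOpen U → x ∈ U → IsMenger (A \ U)) : IsMenger A := by
  intro 𝒰 hopen hcov
  obtain ⟨U₀, hU₀, hxU₀⟩ : x ∈ ⋃₀ 𝒰 0 := hcov 0 ▸ mem_univ x
  obtain ⟨𝒱, h𝒱, hdiff⟩ :=
    h U₀ (hopen 0 U₀ hU₀) hxU₀ (fun n ↦ 𝒰 (n + 1)) (fun _ ↦ hopen _) (fun _ ↦ hcov _)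
  refine ⟨fun n ↦ Nat.casesOn n {U₀} 𝒱, fun n ↦ ?_, fun y hy ↦ ?_⟩
  · cases n with
    | zero => exact ⟨singleton_subset_iff.mpr hU₀, finite_singleton U₀⟩
    | succ n => exact h𝒱 n
  · by_cases hyU₀ : y ∈ U₀
    · exact mem_iUnion.mpr ⟨0, U₀, rfl, hyU₀⟩
    · obtain ⟨n, hn⟩ := mem_iUnion.mp (hdiff ⟨hy, hyU₀⟩)
      exact mem_iUnion.mpr ⟨n + 1, hn⟩

theorem exists_isMenger_mem_nhds_of_eventually_nhdsNE [RegularSpace X] [LindelofSpace X]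
    {x : X} (h : ∀ᶠ y in 𝓝[≠] x, ∃ U ∈ 𝓝 y, IsMenger U) : ∃ t ∈ 𝓝 x, IsMenger t := by
  rw [eventually_nhdsWithin_iff, (closed_nhds_basis x).eventually_iff] at h
  obtain ⟨t, ⟨ht, htc⟩, hgood⟩ := h
  refine ⟨t, ht, isMenger_of_isMenger_diff x fun U hU hxU ↦ ?_⟩
  refine (htc.isLindelof.diff hU).isMenger fun y hy ↦ hgood hy.1 ?_
  rintro rfl
  exact hy.2 hxU

theorem IsScatteredSet.forall_of_eventually_nhdsNE
    (hX : IsScatteredSet (univ : Set X)) {p : X → Prop}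
    (h : ∀ x, (∀ᶠ y in 𝓝[≠] x, p y) → p x) (x : X) : p x := by
  by_contra hx
  obtain ⟨z, hz, U, hU, hUbad⟩ := hX {y | ¬p y} (subset_univ _) ⟨x, hx⟩
  refine hz (h z ?_)
  filter_upwards [mem_nhdsWithin_of_mem_nhds (hU.mem_nhds (hUbad.ge rfl).1), self_mem_nhdsWithin]
    with y hyU hyz
  by_contra hy
  exact hyz (hUbad.le ⟨hyU, hy⟩)

end Menger

/-- Every Lindelöf scattered regular space is Menger. -/
theorem menger_of_lindelof_scattered
    {X : Type*} [TopologicalSpace X] [RegularSpace X] [LindelofSpace X]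
    (hscat : IsScatteredSet (Set.univ : Set X)) :
    IsMengerSpace X := by
  have hgood : ∀ x : X, ∃ U ∈ 𝓝 x, IsMenger U :=
    hscat.forall_of_eventually_nhdsNE fun _ ↦ exists_isMenger_mem_nhds_of_eventually_nhdsNE
  intro 𝒰 hopen hcov
  obtain ⟨𝒱, h𝒱, hsub⟩ := isLindelof_univ.isMenger (fun x _ ↦ hgood x) 𝒰 hopen hcov
  exact ⟨𝒱, h𝒱, univ_subset_iff.mp hsub⟩
end

section
/- Let Y be a first-countable Tychonoff space, K a compactification of Y, and y ∈ Y. Then y has countable character in K; in particular there exist open sets W_n ⊆ K with closure(W_{n+1}) ⊆ W_n and ⋂_n W_n = ⋂_n closure(W_n) = {y}. -/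
/-!
A compact Hausdorff space is regular, and for a dense embedding `e` into a regular space the
closures of the images of a neighbourhood basis of `y` form a neighbourhood basis of `e y`; so
`e y` inherits countable character from `y`. Thinning out a countable open basis at `e y` so that
each member contains the closure of the next gives `W`; its intersection is the kernel of
`𝓝 (e y)`, which is `{e y}` in a T₁ space.
-/

open Filter Topology Set

theorem IsDenseInducing.hasBasis_nhds_closure_image {Y K ι : Type*} [TopologicalSpace Y]
    [TopologicalSpace K] [RegularSpace K] {e : Y → K} (de : IsDenseInducing e) {y : Y}
    {p : ι → Prop} {s : ι → Set Y} (hs : (𝓝 y).HasBasis p s) :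
    (𝓝 (e y)).HasBasis p fun i => closure (e '' s i) := by
  refine ⟨fun U => ⟨fun hU => ?_, fun ⟨i, hi, hiU⟩ =>
    mem_of_superset (de.closure_image_mem_nhds (hs.mem_of_mem hi)) hiU⟩⟩
  obtain ⟨C, hC, hCc, hCU⟩ := exists_mem_nhds_isClosed_subset hU
  obtain ⟨i, hi, hiC⟩ := hs.mem_iff.1 (de.continuous.continuousAt.preimage_mem_nhds hC)
  exact ⟨i, hi, (closure_minimal (image_subset_iff.2 hiC) hCc).trans hCU⟩

theorem IsDenseInducing.isCountablyGenerated_nhds {Y K : Type*} [TopologicalSpace Y]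
    [TopologicalSpace K] [RegularSpace K] {e : Y → K} (de : IsDenseInducing e) (y : Y)
    [(𝓝 y).IsCountablyGenerated] : (𝓝 (e y)).IsCountablyGenerated :=
  let ⟨_, hB⟩ := (𝓝 y).exists_antitone_basis
  (de.hasBasis_nhds_closure_image hB.toHasBasis).isCountablyGenerated

theorem exists_nhds_basis_isOpen_closure_succ_subset {X : Type*} [TopologicalSpace X]
    [RegularSpace X] (x : X) [(𝓝 x).IsCountablyGenerated] :
    ∃ W : ℕ → Set X, (∀ n, IsOpen (W n)) ∧ (∀ n, closure (W (n + 1)) ⊆ W n) ∧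
      (𝓝 x).HasBasis (fun _ => True) W := by
  obtain ⟨u, hu, hB⟩ := (nhds_basis_opens x).exists_antitone_subbasis
  have hstep : ∀ n, ∃ m, n < m ∧ closure (u m) ⊆ u n := fun n => by
    obtain ⟨m, -, hm⟩ := hB.toHasBasis.nhds_closure.mem_iff.1 (hB.mem n)
    exact ⟨max m (n + 1), by omega, (closure_mono (hB.antitone (le_max_left _ _))).trans hm⟩
  choose g hg_lt hg using hstep
  have hle : ∀ n, n ≤ g^[n] 0 := fun n => by
    induction n with
    | zero => rfl
    | succ n ih => rw [Function.iterate_succ_apply']; exact (hg_lt _).trans_le' ih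
  refine ⟨fun n => u (g^[n] 0), fun n => (hu _).2, fun n => ?_, ?_⟩
  · simpa only [Function.iterate_succ_apply'] using hg (g^[n] 0)
  · exact hB.toHasBasis.to_hasBasis (fun n _ => ⟨n, trivial, hB.antitone (hle n)⟩)
      fun n _ => ⟨g^[n] 0, trivial, subset_rfl⟩

theorem iInter_closure_eq_iInter_of_closure_succ_subset {X : Type*} [TopologicalSpace X]
    {W : ℕ → Set X} (hW : ∀ n, closure (W (n + 1)) ⊆ W n) :
    ⋂ n, closure (W n) = ⋂ n, W n :=
  (iInter_mono fun _ => subset_closure).antisymm' <|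
    subset_iInter fun n => (iInter_subset _ (n + 1)).trans (hW n)

theorem countable_character_in_compactification_general
    {Y K : Type*} [TopologicalSpace Y] [FirstCountableTopology Y]
    [TopologicalSpace K] [CompactSpace K] [T2Space K]
    (e : Y → K) (he : Topology.IsEmbedding e) (hdense : DenseRange e) (y : Y) :
    (nhds (e y)).IsCountablyGenerated ∧
      ∃ W : ℕ → Set K, (∀ n, IsOpen (W n)) ∧
        (∀ n, closure (W (n + 1)) ⊆ W n) ∧
        (⋂ n, W n) = {e y} ∧ (⋂ n, closure (W n)) = {e y} := by
  have hcg : (𝓝 (e y)).IsCountablyGenerated :=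
    IsDenseInducing.isCountablyGenerated_nhds ⟨he.isInducing, hdense⟩ y
  obtain ⟨W, hWo, hWcl, hWB⟩ := exists_nhds_basis_isOpen_closure_succ_subset (e y)
  have hWinter : ⋂ n, W n = {e y} := by
    simpa only [ker_nhds, iInter_true] using hWB.ker.symm
  exact ⟨hcg, W, hWo, hWcl, hWinter,
    (iInter_closure_eq_iInter_of_closure_succ_subset hWcl).trans hWinter⟩

/-- If `K` is a compactification of a first-countable Tychonoff space `Y`, then every
point of `Y` has countable character in `K`; in particular it admits a decreasing
sequence of open sets as in the statement. -/
theorem countable_character_in_compactification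
    {Y K : Type*} [TopologicalSpace Y] [FirstCountableTopology Y] [T35Space Y]
    [TopologicalSpace K] [CompactSpace K] [T2Space K]
    (e : Y → K) (he : Topology.IsEmbedding e) (hdense : DenseRange e) (y : Y) :
    (nhds (e y)).IsCountablyGenerated ∧
      ∃ W : ℕ → Set K, (∀ n, IsOpen (W n)) ∧
        (∀ n, closure (W (n + 1)) ⊆ W n) ∧
        (⋂ n, W n) = {e y} ∧ (⋂ n, closure (W n)) = {e y} :=
  countable_character_in_compactification_general e he hdense y
end

section
/- Let K_γ (γ ∈ Γ) be compact Hausdorff spaces and a ∈ ∏ K_γ. Suppose for each γ there are open sets W_{γ,n} ⊆ K_γ with closure(W_{γ,n+1}) ⊆ W_{γ,n} and ⋂_n closure(W_{γ,n}) = {a_γ}. Define U_{ξ,n} = {z ∈ ∏ K_γ : z(ξ) ∉ closure(W_{ξ,n})}. Then (1) the union of all U_{ξ,n} is ∏ K_γ \ {a}, and (2) for every x in the Σ-product Σ(∏ K_γ, a), the family of pairs (ξ,n) with x ∈ closure(U_{ξ,n}) is countable. -/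
/-- The Σ-product of the family `Y` based at the point `c`. -/
def SigmaProduct {Γ : Type*} (Y : Γ → Type*) (c : ∀ γ, Y γ) : Set (∀ γ, Y γ) :=
  {x | {γ | x γ ≠ c γ}.Countable}

/-! A coordinate `z ξ` differs from `a ξ` exactly when it leaves one of the sets `W ξ n`,
which gives the cover. For the countability, `a ξ` lies in the interior of every
`closure (W ξ n)`, so a point `x` can only be in the closure of `U ξ n` when `x ξ ≠ a ξ`;
for `x` in the Σ-product there are countably many such `ξ`. -/

open Set

section

variable {Γ ι : Type*} {X : Γ → Type*}

theorem iUnion_setOf_apply_notMem_eq_compl_singleton (a : ∀ γ, X γ) (S : ∀ γ, ι → Set (X γ))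
    (hS : ∀ γ, ⋂ n, S γ n = {a γ}) :
    ⋃ (ξ : Γ) (n : ι), {z : ∀ γ, X γ | z ξ ∉ S ξ n} = {a}ᶜ := by
  ext z
  have hcoord : ∀ ξ, z ξ ≠ a ξ ↔ ∃ n, z ξ ∉ S ξ n := fun ξ => by
    rw [Ne, ← mem_singleton_iff, ← hS ξ, mem_iInter, not_forall]
  simp only [mem_iUnion, mem_ofPred_eq, mem_compl_iff, mem_singleton_iff, Function.ne_iff,
    hcoord]

theorem notMem_closure_setOf_apply_notMem [∀ γ, TopologicalSpace (X γ)] {x : ∀ γ, X γ}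
    {ξ : Γ} {S : Set (X ξ)} (hx : x ξ ∈ interior S) :
    x ∉ closure {z : ∀ γ, X γ | z ξ ∉ S} := fun hcl => by
  have : x ξ ∈ closure Sᶜ := (continuous_apply ξ).closure_preimage_subset Sᶜ hcl
  rw [closure_compl] at this
  exact this hx

theorem SigmaProduct.countable_setOf_mem_closure_setOf_apply_notMem [Countable ι]
    [∀ γ, TopologicalSpace (X γ)] {a : ∀ γ, X γ} {S : ∀ γ, ι → Set (X γ)}
    (haS : ∀ γ n, a γ ∈ interior (S γ n)) {x : ∀ γ, X γ} (hx : x ∈ SigmaProduct X a) :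
    {p : Γ × ι | x ∈ closure {z : ∀ γ, X γ | z p.1 ∉ S p.1 p.2}}.Countable := by
  refine (hx.prod (countable_univ (α := ι))).mono fun ⟨ξ, n⟩ hp => mk_mem_prod ?_ (mem_univ n)
  exact fun hxa => notMem_closure_setOf_apply_notMem (hxa ▸ haS ξ n) hp

end

theorem sigmaProduct_cover_lemma_general
    {Γ : Type*} {K : Γ → Type*} [∀ γ, TopologicalSpace (K γ)]
    (a : ∀ γ, K γ) (W : ∀ γ, ℕ → Set (K γ))
    (hopen : ∀ γ n, IsOpen (W γ n))
    (hdec : ∀ γ n, closure (W γ (n + 1)) ⊆ W γ n)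
    (hint : ∀ γ, (⋂ n, closure (W γ n)) = {a γ}) :
    (⋃ (ξ : Γ) (n : ℕ), {z : ∀ γ, K γ | z ξ ∉ closure (W ξ n)}) = {a}ᶜ ∧
      ∀ x ∈ SigmaProduct K a,
        {p : Γ × ℕ | x ∈ closure {z : ∀ γ, K γ | z p.1 ∉ closure (W p.1 p.2)}}.Countable := by
  have haW : ∀ γ n, a γ ∈ W γ n := fun γ n =>
    hdec γ n (mem_iInter.mp ((hint γ).symm ▸ mem_singleton (a γ)) (n + 1))
  have haInt : ∀ γ n, a γ ∈ interior (closure (W γ n)) := fun γ n =>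
    (hopen γ n).subset_interior_closure (haW γ n)
  exact ⟨iUnion_setOf_apply_notMem_eq_compl_singleton a _ hint,
    fun x hx => SigmaProduct.countable_setOf_mem_closure_setOf_apply_notMem haInt hx⟩

/-- Given compact Hausdorff spaces `K γ`, a point `a` of the product and decreasing
open neighborhoods `W γ n` of `a γ` with intersection of closures `{a γ}`, the open
sets `U ξ n = {z | z ξ ∉ closure (W ξ n)}` cover the complement of `{a}` and, for any
point `x` of the Σ-product based at `a`, only countably many of them have `x` in
their closure. -/
theorem sigmaProduct_cover_lemma
    {Γ : Type*} {K : Γ → Type*} [∀ γ, TopologicalSpace (K γ)]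
    [∀ γ, CompactSpace (K γ)] [∀ γ, T2Space (K γ)]
    (a : ∀ γ, K γ) (W : ∀ γ, ℕ → Set (K γ))
    (hopen : ∀ γ n, IsOpen (W γ n))
    (hdec : ∀ γ n, closure (W γ (n + 1)) ⊆ W γ n)
    (hint : ∀ γ, (⋂ n, closure (W γ n)) = {a γ}) :
    (⋃ (ξ : Γ) (n : ℕ), {z : ∀ γ, K γ | z ξ ∉ closure (W ξ n)}) = {a}ᶜ ∧
      ∀ x ∈ SigmaProduct K a,
        {p : Γ × ℕ | x ∈ closure {z : ∀ γ, K γ | z p.1 ∉ closure (W p.1 p.2)}}.Countable :=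
  sigmaProduct_cover_lemma_general a W hopen hdec hint
end
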